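/- If h_γ is the T-invariant function associated to a solution γ of Mγ = 0 and z_ℓ ∈ I_ℓ, then the right limit lim_{x↓z_ℓ} h_γ(x) equals γ_ℓ. In particular, the map γ ↦ h_γ from the null space of M to L¹ is injective. -/

import Mathlib

/-!
Since `Σ_j p_j / |k_{n,j}| ≤ ρ < 1` on every interval, the words of length `t` carry total weight
`Σ |δ_ω(y)| ≤ ρ^t`, so the series `L_y(x)`, `KI_n(y)`, `KB_ℓ(y)` converge absolutely, uniformly
on `[0,1]`, and limits can be taken term by term. As `x ↓ z_ℓ`, `1_{[0,T_ω y)}(x)` tends to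
`1_{(z_ℓ,1]}(T_ω y)`, so `L_y(x) → KB_ℓ(y)` and `h_γ(z_ℓ+)` is `h_γ` with `L` replaced by `KB_ℓ`.
Splitting off the last letter of a word gives `KI_n = S_n K_n`, hence `KB_ℓ = Σ_{n>ℓ} S_n⁻¹ KI_n`;
the `n`-th row of `Mγ = 0` identifies the `KI_n`-part of `h_γ(z_ℓ+)` with `S_n (γ_{n-1} - γ_n)`,
and the sum over `n > ℓ` telescopes to `γ_ℓ`.
-/

open Set

noncomputable section

/-- `T_ω = T_{ω_t} ∘ ⋯ ∘ T_{ω_1}` (head of the list applied first). -/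
def rwordApply (T : ℕ → ℝ → ℝ) : List ℕ → ℝ → ℝ
  | [], y => y
  | j :: ω, y => rwordApply T ω (T j y)

/-- the weighted slope product `δ_ω(y,|ω|)`; `ι x` is the index of the
partition interval containing `x`. -/
def rdelta (p : ℕ → ℝ) (k : ℕ → ℕ → ℝ) (ι : ℝ → ℕ) (T : ℕ → ℝ → ℝ) :
    List ℕ → ℝ → ℝ
  | [], _ => 1
  | j :: ω, y => p j / k (ι y) j * rdelta p k ι T ω (T j y)

/-- the random piecewise linear map with slopes `k`, intercepts `d`. -/
def Tpl (k d : ℕ → ℕ → ℝ) (ι : ℝ → ℕ) (j : ℕ) (x : ℝ) : ℝ :=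
  k (ι x) j * x + d (ι x) j

/-- finite words with letters in `Ωs`. -/
def Words (Ωs : Set ℕ) : Type := {ω : List ℕ // ∀ j ∈ ω, j ∈ Ωs}

/-- `KI_n(y) = Σ_{t≥1} Σ_{ω ∈ Ωᵗ} δ_ω(y,t)·1_{I_n}(T_{ω₁^{t-1}}(y))`. -/
def KI (Ωs : Set ℕ) (p : ℕ → ℝ) (k : ℕ → ℕ → ℝ) (ι : ℝ → ℕ) (T : ℕ → ℝ → ℝ)
    (n : ℕ) (y : ℝ) : ℝ :=
  ∑' ω : {ω : List ℕ // (∀ j ∈ ω, j ∈ Ωs) ∧ ω ≠ []},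
    if ι (rwordApply T ω.1.dropLast y) = n then rdelta p k ι T ω.1 y else 0

/-- `KA_i(y) = Σ_{t≥0} Σ_{ω ∈ Ωᵗ} δ_ω(y,t)·1_{I_1 ∪ ⋯ ∪ I_i}(T_ω(y))`. -/
def KA (Ωs : Set ℕ) (p : ℕ → ℝ) (k : ℕ → ℕ → ℝ) (ι : ℝ → ℕ) (T : ℕ → ℝ → ℝ)
    (i : ℕ) (y : ℝ) : ℝ :=
  ∑' ω : Words Ωs,
    if ι (rwordApply T ω.1 y) ≤ i then rdelta p k ι T ω.1 y else 0

/-- `KB_i(y) = Σ_{t≥0} Σ_{ω ∈ Ωᵗ} δ_ω(y,t)·1_{I_{i+1} ∪ ⋯ ∪ I_N}(T_ω(y))`. -/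
def KB (Ωs : Set ℕ) (p : ℕ → ℝ) (k : ℕ → ℕ → ℝ) (ι : ℝ → ℕ) (T : ℕ → ℝ → ℝ)
    (i : ℕ) (y : ℝ) : ℝ :=
  ∑' ω : Words Ωs,
    if i < ι (rwordApply T ω.1 y) then rdelta p k ι T ω.1 y else 0

/-- `S_n = Σ_{j∈Ω} p_j / k_{n,j}`, the average inverse slope on `I_n`. -/
def Sav (Ωs : Set ℕ) (p : ℕ → ℝ) (k : ℕ → ℕ → ℝ) (n : ℕ) : ℝ :=
  ∑' j : Ωs, p j.1 / k n j.1

/-- `a_{i,j} = k_{i,j} z_i + d_{i,j}`, the left limit of `T_j` at `z_i`. -/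
def aPt (k d : ℕ → ℕ → ℝ) (z : ℕ → ℝ) (i j : ℕ) : ℝ := k i j * z i + d i j

/-- `b_{i,j} = k_{i+1,j} z_i + d_{i+1,j}`, the right limit of `T_j` at `z_i`. -/
def bPt (k d : ℕ → ℕ → ℝ) (z : ℕ → ℝ) (i j : ℕ) : ℝ := k (i + 1) j * z i + d (i + 1) j

/-- the entries `μ_{n,i}` of the fundamental matrix (Definition 3.2). -/
def fundM (Ωs : Set ℕ) (p : ℕ → ℝ) (k d : ℕ → ℕ → ℝ) (ι : ℝ → ℕ) (z : ℕ → ℝ)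
    (n i : ℕ) : ℝ :=
  ∑' j : Ωs,
    ((if n = i then p j.1 / k i j.1 else 0) -
      (if n = i + 1 then p j.1 / k (i + 1) j.1 else 0) +
      (p j.1 / k i j.1 * KI Ωs p k ι (Tpl k d ι) n (aPt k d z i j.1) -
        p j.1 / k (i + 1) j.1 * KI Ωs p k ι (Tpl k d ι) n (bPt k d z i j.1)))

/-- `L_y(x) = Σ_{t≥0} Σ_{ω∈Ωᵗ} δ_ω(y,t)·1_{[0,T_ω(y))}(x)`. -/
def Lfun (Ωs : Set ℕ) (p : ℕ → ℝ) (k : ℕ → ℕ → ℝ) (ι : ℝ → ℕ) (T : ℕ → ℝ → ℝ)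
    (y x : ℝ) : ℝ :=
  ∑' ω : Words Ωs,
    if x ∈ Ico (0:ℝ) (rwordApply T ω.1 y) then rdelta p k ι T ω.1 y else 0

/-- `h_γ(x) = Σ_{m=1}^{N−1} γ_m Σ_{ℓ∈Ω} [(p_ℓ/k_{m,ℓ}) L_{a_{m,ℓ}}(x) −
(p_ℓ/k_{m+1,ℓ}) L_{b_{m,ℓ}}(x)]`. -/
def hFun (Ωs : Set ℕ) (N : ℕ) (p : ℕ → ℝ) (k d : ℕ → ℕ → ℝ) (ι : ℝ → ℕ) (z : ℕ → ℝ)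
    (γ : ℕ → ℝ) (x : ℝ) : ℝ :=
  ∑ m ∈ Finset.Icc 1 (N - 1), γ m *
    ∑' j : Ωs,
      (p j.1 / k m j.1 * Lfun Ωs p k ι (Tpl k d ι) (aPt k d z m j.1) x -
        p j.1 / k (m + 1) j.1 * Lfun Ωs p k ι (Tpl k d ι) (bPt k d z m j.1) x)

open Filter Topology
open scoped ENNReal

section Words

variable {Ωs : Set ℕ} {p : ℕ → ℝ} {k : ℕ → ℕ → ℝ} {ι : ℝ → ℕ} {T : ℕ → ℝ → ℝ}

theorem rwordApply_mem_Icc (hT : ∀ j ∈ Ωs, MapsTo (T j) (Icc 0 1) (Icc 0 1)) :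
    ∀ (ω : List ℕ), (∀ j ∈ ω, j ∈ Ωs) → ∀ {y : ℝ}, y ∈ Icc 0 1 → rwordApply T ω y ∈ Icc 0 1
  | [], _, _, hy => hy
  | j :: ω, hω, _, hy =>
      rwordApply_mem_Icc hT ω (fun i hi => hω i (List.mem_cons_of_mem _ hi))
        (hT j (hω j List.mem_cons_self) hy)

theorem rdelta_concat (ω : List ℕ) (j : ℕ) (y : ℝ) :
    rdelta p k ι T (ω ++ [j]) y = rdelta p k ι T ω y * (p j / k (ι (rwordApply T ω y)) j) := by
  induction ω generalizing y with
  | nil => simp [rdelta, rwordApply]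
  | cons i ω ih => simp only [List.cons_append, rdelta, rwordApply, ih]; ring

def Words.concatEquiv (Ωs : Set ℕ) :
    Words Ωs × Ωs ≃ {ω : List ℕ // (∀ j ∈ ω, j ∈ Ωs) ∧ ω ≠ []} where
  toFun x := ⟨x.1.1 ++ [x.2.1], by
    refine ⟨fun i hi => ?_, by simp⟩
    rcases List.mem_append.1 hi with h | h
    · exact x.1.2 i h
    · exact List.mem_singleton.1 h ▸ x.2.2⟩
  invFun ω :=
    (⟨ω.1.dropLast, fun i hi => ω.2.1 i ((List.dropLast_sublist ω.1).subset hi)⟩,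
     ⟨ω.1.getLast ω.2.2, ω.2.1 _ (List.getLast_mem ω.2.2)⟩)
  left_inv := by
    rintro ⟨⟨ω, hω⟩, ⟨j, hj⟩⟩
    exact Prod.ext (Subtype.ext List.dropLast_concat) (Subtype.ext List.getLast_concat)
  right_inv := by
    rintro ⟨ω, hω, hne⟩
    exact Subtype.ext (List.dropLast_append_getLast hne)

end Words

section WordWeight

variable {Ωs : Set ℕ} {p : ℕ → ℝ} {k : ℕ → ℕ → ℝ} {ι : ℝ → ℕ} {T : ℕ → ℝ → ℝ} {r : ℝ≥0∞}

/-- `‖δ_ω(y)‖ₑ`, extended by zero to words with a letter outside `Ωs`, so that the recursion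
runs over all of `List ℕ`. -/
def wordWeight (Ωs : Set ℕ) (p : ℕ → ℝ) (k : ℕ → ℕ → ℝ) (ι : ℝ → ℕ) (T : ℕ → ℝ → ℝ) :
    List ℕ → ℝ → ℝ≥0∞
  | [], _ => 1
  | j :: ω, y => Ωs.indicator (fun j => ‖p j / k (ι y) j‖ₑ) j * wordWeight Ωs p k ι T ω (T j y)

theorem enorm_rdelta :
    ∀ (ω : List ℕ), (∀ j ∈ ω, j ∈ Ωs) → ∀ y : ℝ,
      ‖rdelta p k ι T ω y‖ₑ = wordWeight Ωs p k ι T ω y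
  | [], _, _ => by simp [rdelta, wordWeight]
  | j :: ω, hω, y => by
      rw [rdelta, wordWeight, enorm_mul, indicator_of_mem (hω j List.mem_cons_self),
        enorm_rdelta ω (fun i hi => hω i (List.mem_cons_of_mem _ hi))]

structure ExpandingOnAverage (Ωs : Set ℕ) (p : ℕ → ℝ) (k : ℕ → ℕ → ℝ) (ι : ℝ → ℕ)
    (T : ℕ → ℝ → ℝ) (r : ℝ≥0∞) : Prop where
  mapsTo : ∀ j ∈ Ωs, MapsTo (T j) (Icc 0 1) (Icc 0 1)
  tsum_enorm_le : ∀ y ∈ Icc (0:ℝ) 1, ∑' j : Ωs, ‖p j / k (ι y) j‖ₑ ≤ r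

theorem ExpandingOnAverage.tsum_wordWeight_length_le (hE : ExpandingOnAverage Ωs p k ι T r)
    (n : ℕ) : ∀ y ∈ Icc (0:ℝ) 1,
      ∑' ω : List ℕ, (if n = ω.length then wordWeight Ωs p k ι T ω y else 0) ≤ r ^ n := by
  induction n with
  | zero =>
    intro y _
    simp [eq_comm (a := 0), List.length_eq_zero_iff, wordWeight]
  | succ n ih =>
    intro y hy
    set c : ℕ → ℝ≥0∞ := Ωs.indicator fun j => ‖p j / k (ι y) j‖ₑ
    have hcons : Function.Injective fun jω : ℕ × List ℕ => jω.1 :: jω.2 :=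
      fun a b h => Prod.ext (List.cons.inj h).1 (List.cons.inj h).2
    calc ∑' ω : List ℕ, (if n + 1 = ω.length then wordWeight Ωs p k ι T ω y else 0)
        = ∑' jω : ℕ × List ℕ, (if n + 1 = (jω.1 :: jω.2).length
            then wordWeight Ωs p k ι T (jω.1 :: jω.2) y else 0) := by
          refine (hcons.tsum_eq fun ω hω => ?_).symm
          cases ω with
          | nil => simp at hω
          | cons j ω => exact ⟨(j, ω), rfl⟩
      _ = ∑' j : ℕ, c j * ∑' ω : List ℕ,
            (if n = ω.length then wordWeight Ωs p k ι T ω (T j y) else 0) := by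
          rw [ENNReal.tsum_prod']
          refine tsum_congr fun j => ?_
          rw [← ENNReal.tsum_mul_left]
          refine tsum_congr fun ω => ?_
          simp only [List.length_cons, Nat.add_right_cancel_iff, wordWeight, c, mul_ite,
            mul_zero]
      _ ≤ ∑' j : ℕ, c j * r ^ n := by
          refine ENNReal.tsum_le_tsum fun j => ?_
          by_cases hj : j ∈ Ωs
          · gcongr
            exact ih _ (hE.mapsTo j hj hy)
          · simp [c, hj]
      _ = (∑' j : Ωs, ‖p j / k (ι y) j‖ₑ) * r ^ n := by
          rw [ENNReal.tsum_mul_right, tsum_subtype Ωs fun j => ‖p j / k (ι y) j‖ₑ]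
      _ ≤ r ^ (n + 1) := by
          rw [pow_succ']
          gcongr
          exact hE.tsum_enorm_le y hy

theorem ExpandingOnAverage.tsum_enorm_rdelta_le (hE : ExpandingOnAverage Ωs p k ι T r)
    {y : ℝ} (hy : y ∈ Icc (0:ℝ) 1) :
    ∑' ω : Words Ωs, ‖rdelta p k ι T ω.1 y‖ₑ ≤ (1 - r)⁻¹ :=
  calc ∑' ω : Words Ωs, ‖rdelta p k ι T ω.1 y‖ₑ
      = ∑' ω : Words Ωs, wordWeight Ωs p k ι T ω.1 y :=
        tsum_congr fun ω => enorm_rdelta ω.1 ω.2 y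
    _ ≤ ∑' ω : List ℕ, wordWeight Ωs p k ι T ω y :=
        ENNReal.tsum_comp_le_tsum_of_injective Subtype.val_injective _
    _ = ∑' n : ℕ, ∑' ω : List ℕ, (if n = ω.length then wordWeight Ωs p k ι T ω y else 0) := by
        rw [ENNReal.tsum_comm]
        exact tsum_congr fun ω => (tsum_ite_eq ω.length fun _ => wordWeight Ωs p k ι T ω y).symm
    _ ≤ ∑' n : ℕ, r ^ n := ENNReal.tsum_le_tsum fun n => hE.tsum_wordWeight_length_le n y hy
    _ = (1 - r)⁻¹ := ENNReal.tsum_geometric r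

end WordWeight

section Series

variable {Ωs : Set ℕ} {p : ℕ → ℝ} {k : ℕ → ℕ → ℝ} {ι : ℝ → ℕ} {T : ℕ → ℝ → ℝ} {r : ℝ≥0∞}
  {y : ℝ}

namespace ExpandingOnAverage

theorem summable_and_abs_tsum_le (hE : ExpandingOnAverage Ωs p k ι T r) (hr : r < 1)
    (hy : y ∈ Icc (0:ℝ) 1) {β : Type*} {g : β → Words Ωs} (hg : Function.Injective g)
    {f : β → ℝ} (hf : ∀ b, |f b| ≤ |rdelta p k ι T (g b).1 y|) :
    Summable f ∧ |∑' b, f b| ≤ ((1 - r)⁻¹).toReal := by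
  have hfin : (1 - r)⁻¹ ≠ ∞ := ENNReal.inv_ne_top.2 (tsub_pos_of_lt hr).ne'
  have hle : ∑' b, ‖f b‖ₑ ≤ (1 - r)⁻¹ :=
    calc ∑' b, ‖f b‖ₑ ≤ ∑' b, ‖rdelta p k ι T (g b).1 y‖ₑ :=
          ENNReal.tsum_le_tsum fun b => by
            simpa only [Real.enorm_eq_ofReal_abs] using ENNReal.ofReal_le_ofReal (hf b)
      _ ≤ ∑' ω : Words Ωs, ‖rdelta p k ι T ω.1 y‖ₑ :=
          ENNReal.tsum_comp_le_tsum_of_injective hg fun ω => ‖rdelta p k ι T ω.1 y‖ₑ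
      _ ≤ (1 - r)⁻¹ := hE.tsum_enorm_rdelta_le hy
  refine ⟨Summable.of_enorm (ne_top_of_le_ne_top hfin hle), ?_⟩
  rw [← ENNReal.ofReal_le_iff_le_toReal hfin, ← Real.enorm_eq_ofReal_abs]
  exact enorm_tsum_le_tsum_enorm.trans hle

theorem summable_ite_rdelta (hE : ExpandingOnAverage Ωs p k ι T r) (hr : r < 1)
    (hy : y ∈ Icc (0:ℝ) 1) (P : Words Ωs → Prop) [DecidablePred P] :
    Summable (fun ω : Words Ωs => if P ω then rdelta p k ι T ω.1 y else 0) ∧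
      |∑' ω : Words Ωs, if P ω then rdelta p k ι T ω.1 y else 0| ≤ ((1 - r)⁻¹).toReal :=
  hE.summable_and_abs_tsum_le hr hy Function.injective_id fun ω => by split_ifs <;> simp

theorem abs_Lfun_le (hE : ExpandingOnAverage Ωs p k ι T r) (hr : r < 1)
    (hy : y ∈ Icc (0:ℝ) 1) (x : ℝ) : |Lfun Ωs p k ι T y x| ≤ ((1 - r)⁻¹).toReal := by
  classical
  exact (hE.summable_ite_rdelta hr hy fun ω => x ∈ Ico 0 (rwordApply T ω.1 y)).2

theorem abs_KI_le (hE : ExpandingOnAverage Ωs p k ι T r) (hr : r < 1)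
    (hy : y ∈ Icc (0:ℝ) 1) (n : ℕ) : |KI Ωs p k ι T n y| ≤ ((1 - r)⁻¹).toReal := by
  let g : {ω : List ℕ // (∀ j ∈ ω, j ∈ Ωs) ∧ ω ≠ []} → Words Ωs := fun ω => ⟨ω.1, ω.2.1⟩
  have hg : Function.Injective g := fun _ _ h => Subtype.ext (congrArg (fun ω : Words Ωs => ω.1) h)
  exact (hE.summable_and_abs_tsum_le hr hy hg fun ω => by split_ifs <;> simp [g]).2

theorem KI_eq_mul_Sav (hE : ExpandingOnAverage Ωs p k ι T r) (hr : r < 1)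
    (hy : y ∈ Icc (0:ℝ) 1) {n : ℕ} (hn : Summable fun j : Ωs => p j / k n j) :
    KI Ωs p k ι T n y =
      (∑' ω : Words Ωs, if ι (rwordApply T ω.1 y) = n then rdelta p k ι T ω.1 y else 0) *
        Sav Ωs p k n := by
  classical
  have hK := (hE.summable_ite_rdelta hr hy fun ω => ι (rwordApply T ω.1 y) = n).1
  rw [Sav, tsum_mul_tsum_of_summable_norm hK.norm hn.norm, KI,
    ← (Words.concatEquiv Ωs).tsum_eq]
  refine tsum_congr fun ⟨⟨ω, hω⟩, ⟨j, hj⟩⟩ => ?_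
  change (if ι (rwordApply T (ω ++ [j]).dropLast y) = n
    then rdelta p k ι T (ω ++ [j]) y else 0) = _
  rw [List.dropLast_concat]
  split_ifs with h
  · rw [rdelta_concat, h]
  · rw [zero_mul]

theorem KB_eq_sum_KI (hE : ExpandingOnAverage Ωs p k ι T r) (hr : r < 1)
    (hy : y ∈ Icc (0:ℝ) 1) {N : ℕ} (hι : ∀ x ∈ Icc (0:ℝ) 1, ι x ∈ Finset.Icc 1 N)
    (hslope : ∀ n ∈ Finset.Icc 1 N, Summable fun j : Ωs => p j / k n j)
    (hS : ∀ n ∈ Finset.Icc 1 N, Sav Ωs p k n ≠ 0) (ℓ : ℕ) :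
    KB Ωs p k ι T ℓ y = ∑ n ∈ Finset.Icc (ℓ + 1) N, (Sav Ωs p k n)⁻¹ * KI Ωs p k ι T n y := by
  classical
  have hsplit : ∀ ω : Words Ωs,
      (if ℓ < ι (rwordApply T ω.1 y) then rdelta p k ι T ω.1 y else 0) =
        ∑ n ∈ Finset.Icc (ℓ + 1) N,
          if ι (rwordApply T ω.1 y) = n then rdelta p k ι T ω.1 y else 0 := by
    intro ω
    have hω := Finset.mem_Icc.1 (hι _ (rwordApply_mem_Icc hE.mapsTo ω.1 ω.2 hy))
    rw [Finset.sum_ite_eq]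
    exact if_congr (by rw [Finset.mem_Icc]; omega) rfl rfl
  rw [KB, tsum_congr hsplit, Summable.tsum_finsetSum fun n _ =>
    (hE.summable_ite_rdelta hr hy fun ω => ι (rwordApply T ω.1 y) = n).1]
  refine Finset.sum_congr rfl fun n hn => ?_
  have hn' : n ∈ Finset.Icc 1 N := by
    rw [Finset.mem_Icc] at hn ⊢
    omega
  rw [hE.KI_eq_mul_Sav hr hy (hslope n hn'), mul_comm _ (Sav Ωs p k n),
    inv_mul_cancel_left₀ (hS n hn')]

theorem tendsto_Lfun_nhdsGT (hE : ExpandingOnAverage Ωs p k ι T r) (hr : r < 1)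
    (hy : y ∈ Icc (0:ℝ) 1) {ℓ : ℕ} {w : ℝ} (hw : 0 ≤ w)
    (hord : ∀ v ∈ Icc (0:ℝ) 1, ℓ < ι v ↔ w < v) :
    Tendsto (fun x => Lfun Ωs p k ι T y x) (𝓝[>] w) (𝓝 (KB Ωs p k ι T ℓ y)) := by
  have habs := hE.summable_and_abs_tsum_le hr hy Function.injective_id
    (f := fun ω => |rdelta p k ι T ω.1 y|) fun ω => (abs_abs _).le
  refine tendsto_tsum_of_dominated_convergence habs.1 (fun ω => ?_)
    (Eventually.of_forall fun x ω => ?_)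
  · have hω := rwordApply_mem_Icc hE.mapsTo ω.1 ω.2 hy
    by_cases hlt : w < rwordApply T ω.1 y
    · rw [if_pos ((hord _ hω).2 hlt)]
      refine tendsto_const_nhds.congr' ?_
      filter_upwards [Ioo_mem_nhdsGT hlt] with x hx
      rw [if_pos ⟨hw.trans hx.1.le, hx.2⟩]
    · rw [if_neg fun h => hlt ((hord _ hω).1 h)]
      refine tendsto_const_nhds.congr' ?_
      filter_upwards [self_mem_nhdsWithin] with x hx
      rw [if_neg fun h => hlt (lt_trans hx h.2)]
  · rw [Real.norm_eq_abs]
    split_ifs <;> simp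

end ExpandingOnAverage

end Series

/-- `Σ_j [(p_j/k_{m,j}) F(a_{m,j}) − (p_j/k_{m+1,j}) F(b_{m,j})]`: `h_γ` is `Σ_m γ_m` times this
for `F = L_·(x)`, and the off-diagonal part of `μ_{n,m}` is this for `F = KI_n`. -/
def weightedJump (Ωs : Set ℕ) (p : ℕ → ℝ) (k d : ℕ → ℕ → ℝ) (z : ℕ → ℝ) (F : ℝ → ℝ)
    (m : ℕ) : ℝ :=
  ∑' j : Ωs, (p j / k m j * F (aPt k d z m j) - p j / k (m + 1) j * F (bPt k d z m j))

section WeightedJump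

variable {Ωs : Set ℕ} {p : ℕ → ℝ} {k d : ℕ → ℕ → ℝ} {z : ℕ → ℝ} {m : ℕ} {C : ℝ}

theorem abs_jumpTerm_le {F : ℝ → ℝ} (hF : ∀ y ∈ Icc (0:ℝ) 1, |F y| ≤ C)
    (hab : ∀ j ∈ Ωs, aPt k d z m j ∈ Icc (0:ℝ) 1 ∧ bPt k d z m j ∈ Icc (0:ℝ) 1) (j : Ωs) :
    |p j / k m j * F (aPt k d z m j) - p j / k (m + 1) j * F (bPt k d z m j)| ≤
      (|p j / k m j| + |p j / k (m + 1) j|) * C :=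
  calc _ ≤ |p j / k m j * F (aPt k d z m j)| + |p j / k (m + 1) j * F (bPt k d z m j)| :=
        abs_sub _ _
    _ ≤ |p j / k m j| * C + |p j / k (m + 1) j| * C := by
        rw [abs_mul, abs_mul]
        gcongr
        exacts [hF _ (hab j j.2).1, hF _ (hab j j.2).2]
    _ = _ := (add_mul _ _ _).symm

theorem summable_jumpTerm (hm : Summable fun j : Ωs => p j / k m j)
    (hm' : Summable fun j : Ωs => p j / k (m + 1) j)
    (hab : ∀ j ∈ Ωs, aPt k d z m j ∈ Icc (0:ℝ) 1 ∧ bPt k d z m j ∈ Icc (0:ℝ) 1)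
    {F : ℝ → ℝ} (hF : ∀ y ∈ Icc (0:ℝ) 1, |F y| ≤ C) :
    Summable fun j : Ωs =>
      p j / k m j * F (aPt k d z m j) - p j / k (m + 1) j * F (bPt k d z m j) :=
  ((hm.abs.add hm'.abs).mul_right C).of_norm_bounded fun j => abs_jumpTerm_le hF hab j

theorem weightedJump_congr
    (hab : ∀ j ∈ Ωs, aPt k d z m j ∈ Icc (0:ℝ) 1 ∧ bPt k d z m j ∈ Icc (0:ℝ) 1)
    {F G : ℝ → ℝ} (hFG : EqOn F G (Icc 0 1)) :
    weightedJump Ωs p k d z F m = weightedJump Ωs p k d z G m :=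
  tsum_congr fun j => by rw [hFG (hab j j.2).1, hFG (hab j j.2).2]

theorem weightedJump_finset_sum (hm : Summable fun j : Ωs => p j / k m j)
    (hm' : Summable fun j : Ωs => p j / k (m + 1) j)
    (hab : ∀ j ∈ Ωs, aPt k d z m j ∈ Icc (0:ℝ) 1 ∧ bPt k d z m j ∈ Icc (0:ℝ) 1)
    {s : Finset ℕ} (c : ℕ → ℝ) {F : ℕ → ℝ → ℝ} (hF : ∀ n ∈ s, ∀ y ∈ Icc (0:ℝ) 1, |F n y| ≤ C) :
    weightedJump Ωs p k d z (fun y => ∑ n ∈ s, c n * F n y) m =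
      ∑ n ∈ s, c n * weightedJump Ωs p k d z (F n) m := by
  unfold weightedJump
  simp_rw [← tsum_mul_left]
  rw [← Summable.tsum_finsetSum fun n hn =>
    (summable_jumpTerm hm hm' hab (hF n hn)).mul_left (c n)]
  refine tsum_congr fun j => ?_
  simp only [Finset.mul_sum, ← Finset.sum_sub_distrib]
  exact Finset.sum_congr rfl fun n _ => by ring

theorem tendsto_weightedJump (hm : Summable fun j : Ωs => p j / k m j)
    (hm' : Summable fun j : Ωs => p j / k (m + 1) j)
    (hab : ∀ j ∈ Ωs, aPt k d z m j ∈ Icc (0:ℝ) 1 ∧ bPt k d z m j ∈ Icc (0:ℝ) 1)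
    {α : Type*} {l : Filter α} {F : α → ℝ → ℝ} {G : ℝ → ℝ}
    (hF : ∀ x, ∀ y ∈ Icc (0:ℝ) 1, |F x y| ≤ C)
    (hFG : ∀ y ∈ Icc (0:ℝ) 1, Tendsto (fun x => F x y) l (𝓝 (G y))) :
    Tendsto (fun x => weightedJump Ωs p k d z (F x) m) l (𝓝 (weightedJump Ωs p k d z G m)) :=
  tendsto_tsum_of_dominated_convergence ((hm.abs.add hm'.abs).mul_right C)
    (fun j => ((hFG _ (hab j j.2).1).const_mul _).sub ((hFG _ (hab j j.2).2).const_mul _))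
    (Eventually.of_forall fun x j => abs_jumpTerm_le (hF x) hab j)

theorem fundM_eq {ι : ℝ → ℕ} (n : ℕ) (hm : Summable fun j : Ωs => p j / k m j)
    (hm' : Summable fun j : Ωs => p j / k (m + 1) j)
    (hab : ∀ j ∈ Ωs, aPt k d z m j ∈ Icc (0:ℝ) 1 ∧ bPt k d z m j ∈ Icc (0:ℝ) 1)
    (hKI : ∀ y ∈ Icc (0:ℝ) 1, |KI Ωs p k ι (Tpl k d ι) n y| ≤ C) :
    fundM Ωs p k d ι z n m =
      ((if n = m then Sav Ωs p k m else 0) - if n = m + 1 then Sav Ωs p k (m + 1) else 0) +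
        weightedJump Ωs p k d z (KI Ωs p k ι (Tpl k d ι) n) m := by
  have hite : ∀ (P : Prop) [Decidable P] (f : Ωs → ℝ), Summable f →
      Summable (fun j => if P then f j else 0) ∧
        ∑' j, (if P then f j else 0) = if P then ∑' j, f j else 0 := by
    intro P _ f hf
    split_ifs <;> simp [hf]
  obtain ⟨hs, he⟩ := hite (n = m) _ hm
  obtain ⟨hs', he'⟩ := hite (n = m + 1) _ hm'
  rw [fundM, Summable.tsum_add (hs.sub hs') (summable_jumpTerm hm hm' hab hKI),
    Summable.tsum_sub hs hs', he, he', Sav, Sav, weightedJump]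

end WeightedJump

theorem sum_mul_eq_of_row_eq_zero {S W γ : ℕ → ℝ} {N n : ℕ} (hn : 2 ≤ n) (hnN : n ≤ N)
    (h : ∑ m ∈ Finset.Icc 1 (N - 1),
      (((if n = m then S m else 0) - if n = m + 1 then S (m + 1) else 0) + W m) * γ m = 0) :
    ∑ m ∈ Finset.Icc 1 (N - 1), W m * γ m = S n * (γ (n - 1) - if n < N then γ n else 0) := by
  have hdiag : ∑ m ∈ Finset.Icc 1 (N - 1), (if n = m then S m else 0) * γ m =
      if n < N then S n * γ n else 0 := by
    simp_rw [ite_mul, zero_mul]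
    rw [Finset.sum_ite_eq]
    exact if_congr (by rw [Finset.mem_Icc]; omega) rfl rfl
  have hsub : ∑ m ∈ Finset.Icc 1 (N - 1), (if n = m + 1 then S (m + 1) else 0) * γ m =
      S n * γ (n - 1) := by
    rw [Finset.sum_eq_single (n - 1) (fun m _ hm => by rw [if_neg (by omega), zero_mul])
      (fun h => absurd (Finset.mem_Icc.2 ⟨by omega, by omega⟩) h),
      if_pos (by omega), Nat.sub_add_cancel (by omega)]
  simp only [add_mul, sub_mul, Finset.sum_add_distrib, Finset.sum_sub_distrib, hdiag,
    hsub] at h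
  split_ifs at h ⊢ <;> linarith

theorem sum_Icc_sub_ite_lt (γ : ℕ → ℝ) {ℓ N : ℕ} (hℓ : ℓ < N) :
    ∑ n ∈ Finset.Icc (ℓ + 1) N, (γ (n - 1) - if n < N then γ n else 0) = γ ℓ := by
  set g : ℕ → ℝ := fun i => if i < N then γ i else 0
  have htel : ∀ M, ℓ ≤ M → ∑ n ∈ Finset.Ioc ℓ M, (g (n - 1) - g n) = g ℓ - g M := by
    refine Nat.le_induction (by simp) fun M hM ih => ?_
    rw [Finset.sum_Ioc_succ_top (by omega), ih, Nat.add_sub_cancel]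
    ring
  calc _ = ∑ n ∈ Finset.Ioc ℓ N, (g (n - 1) - g n) :=
        Finset.sum_congr (Finset.Icc_add_one_left_eq_Ioc ℓ N) fun n hn => by
          rw [Finset.mem_Ioc] at hn
          simp only [g, if_pos (show n - 1 < N by omega)]
    _ = γ ℓ := by simp [htel N hℓ.le, g, hℓ]

section Assembly

variable {Ωs : Set ℕ} {N : ℕ} {p : ℕ → ℝ} {k d : ℕ → ℕ → ℝ} {ι : ℝ → ℕ} {z : ℕ → ℝ}
  {r : ℝ≥0∞}

theorem summable_div_of_summable_div_abs (hp : ∀ j ∈ Ωs, 0 ≤ p j) {c : ℕ → ℝ}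
    (hc : Summable fun j : Ωs => p j / |c j|) : Summable fun j : Ωs => p j / c j := by
  rw [← summable_abs_iff]
  exact hc.congr fun j => by rw [abs_div, abs_of_nonneg (hp j j.2)]

theorem tsum_enorm_div_le (hp : ∀ j ∈ Ωs, 0 ≤ p j) {c : ℕ → ℝ} {ρ : ℝ}
    (hc : Summable fun j : Ωs => p j / |c j|) (hρ : ∑' j : Ωs, p j / |c j| ≤ ρ) :
    ∑' j : Ωs, ‖p j / c j‖ₑ ≤ ENNReal.ofReal ρ := by
  calc ∑' j : Ωs, ‖p j / c j‖ₑ = ∑' j : Ωs, ENNReal.ofReal (p j / |c j|) :=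
        tsum_congr fun j => by rw [Real.enorm_eq_ofReal_abs, abs_div, abs_of_nonneg (hp j j.2)]
    _ = ENNReal.ofReal (∑' j : Ωs, p j / |c j|) :=
        (ENNReal.ofReal_tsum_of_nonneg (fun j : Ωs => div_nonneg (hp j j.2) (abs_nonneg _)) hc).symm
    _ ≤ ENNReal.ofReal ρ := ENNReal.ofReal_le_ofReal hρ

theorem tendsto_hFun_nhdsGT (hE : ExpandingOnAverage Ωs p k ι (Tpl k d ι) r) (hr : r < 1)
    (hslope : ∀ n ∈ Finset.Icc 1 N, Summable fun j : Ωs => p j / k n j)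
    (hab : ∀ i ∈ Finset.Icc 1 (N - 1), ∀ j ∈ Ωs,
      aPt k d z i j ∈ Icc (0:ℝ) 1 ∧ bPt k d z i j ∈ Icc (0:ℝ) 1)
    (γ : ℕ → ℝ) {ℓ : ℕ} (hz : 0 ≤ z ℓ) (hord : ∀ v ∈ Icc (0:ℝ) 1, ℓ < ι v ↔ z ℓ < v) :
    Tendsto (hFun Ωs N p k d ι z γ) (𝓝[>] z ℓ)
      (𝓝 (∑ m ∈ Finset.Icc 1 (N - 1),
        γ m * weightedJump Ωs p k d z (KB Ωs p k ι (Tpl k d ι) ℓ) m)) := by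
  refine tendsto_finsetSum _ fun m hm => Tendsto.const_mul (γ m) ?_
  rw [Finset.mem_Icc] at hm
  exact tendsto_weightedJump (hslope m (Finset.mem_Icc.2 ⟨hm.1, by omega⟩))
    (hslope (m + 1) (Finset.mem_Icc.2 ⟨by omega, by omega⟩)) (hab m (Finset.mem_Icc.2 hm))
    (fun x y hy => hE.abs_Lfun_le hr hy x) fun y hy => hE.tendsto_Lfun_nhdsGT hr hy hz hord

theorem sum_mul_weightedJump_KB (hE : ExpandingOnAverage Ωs p k ι (Tpl k d ι) r) (hr : r < 1)
    (hι : ∀ x ∈ Icc (0:ℝ) 1, ι x ∈ Finset.Icc 1 N)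
    (hslope : ∀ n ∈ Finset.Icc 1 N, Summable fun j : Ωs => p j / k n j)
    (hS : ∀ n ∈ Finset.Icc 1 N, Sav Ωs p k n ≠ 0)
    (hab : ∀ i ∈ Finset.Icc 1 (N - 1), ∀ j ∈ Ωs,
      aPt k d z i j ∈ Icc (0:ℝ) 1 ∧ bPt k d z i j ∈ Icc (0:ℝ) 1)
    {γ : ℕ → ℝ} (hγ : ∀ n ∈ Finset.Icc 1 N,
      ∑ m ∈ Finset.Icc 1 (N - 1), fundM Ωs p k d ι z n m * γ m = 0)
    {ℓ : ℕ} (hℓ : ℓ ∈ Finset.Icc 1 (N - 1)) :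
    ∑ m ∈ Finset.Icc 1 (N - 1), γ m * weightedJump Ωs p k d z (KB Ωs p k ι (Tpl k d ι) ℓ) m =
      γ ℓ := by
  rw [Finset.mem_Icc] at hℓ
  have hslope₂ : ∀ m ∈ Finset.Icc 1 (N - 1), (Summable fun j : Ωs => p j / k m j) ∧
      Summable fun j : Ωs => p j / k (m + 1) j := fun m hm => by
    rw [Finset.mem_Icc] at hm
    exact ⟨hslope m (Finset.mem_Icc.2 ⟨hm.1, by omega⟩),
      hslope (m + 1) (Finset.mem_Icc.2 ⟨by omega, by omega⟩)⟩
  have hKI : ∀ n, ∀ y ∈ Icc (0:ℝ) 1, |KI Ωs p k ι (Tpl k d ι) n y| ≤ ((1 - r)⁻¹).toReal :=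
    fun n y hy => hE.abs_KI_le hr hy n
  have hrow : ∀ n ∈ Finset.Icc (ℓ + 1) N,
      ∑ m ∈ Finset.Icc 1 (N - 1), weightedJump Ωs p k d z (KI Ωs p k ι (Tpl k d ι) n) m * γ m =
        Sav Ωs p k n * (γ (n - 1) - if n < N then γ n else 0) := fun n hn => by
    rw [Finset.mem_Icc] at hn
    refine sum_mul_eq_of_row_eq_zero (by omega) hn.2 <| Eq.trans (Finset.sum_congr rfl
      fun m hm => ?_) (hγ n (Finset.mem_Icc.2 ⟨by omega, hn.2⟩))
    rw [fundM_eq n (hslope₂ m hm).1 (hslope₂ m hm).2 (hab m hm) (hKI n)]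
  calc _ = ∑ m ∈ Finset.Icc 1 (N - 1), γ m * ∑ n ∈ Finset.Icc (ℓ + 1) N,
        (Sav Ωs p k n)⁻¹ * weightedJump Ωs p k d z (KI Ωs p k ι (Tpl k d ι) n) m :=
        Finset.sum_congr rfl fun m hm => by
          rw [weightedJump_congr (hab m hm) fun y hy => hE.KB_eq_sum_KI hr hy hι hslope hS ℓ,
            weightedJump_finset_sum (hslope₂ m hm).1 (hslope₂ m hm).2 (hab m hm) _
              fun n _ => hKI n]
    _ = ∑ n ∈ Finset.Icc (ℓ + 1) N, (Sav Ωs p k n)⁻¹ * ∑ m ∈ Finset.Icc 1 (N - 1),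
        weightedJump Ωs p k d z (KI Ωs p k ι (Tpl k d ι) n) m * γ m := by
          simp_rw [Finset.mul_sum]
          rw [Finset.sum_comm]
          exact Finset.sum_congr rfl fun n _ => Finset.sum_congr rfl fun m _ => by ring
    _ = ∑ n ∈ Finset.Icc (ℓ + 1) N, (γ (n - 1) - if n < N then γ n else 0) :=
        Finset.sum_congr rfl fun n hn => by
          have hn' : n ∈ Finset.Icc 1 N := by
            rw [Finset.mem_Icc] at hn ⊢
            omega
          rw [hrow n hn, inv_mul_cancel_left₀ (hS n hn')]
    _ = γ ℓ := sum_Icc_sub_ite_lt γ (by omega)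

end Assembly

theorem stmt_12_general (Ωs : Set ℕ) (N : ℕ) (p : ℕ → ℝ) (ρ : ℝ)
    (hρ1 : ρ < 1)
    (hp : ∀ j ∈ Ωs, 0 < p j)
    (k d : ℕ → ℕ → ℝ) (ι : ℝ → ℕ) (z : ℕ → ℝ)
    (hι : ∀ x ∈ Icc (0:ℝ) 1, ι x ∈ Finset.Icc 1 N)
    (hT : ∀ j ∈ Ωs, ∀ x ∈ Icc (0:ℝ) 1, Tpl k d ι j x ∈ Icc (0:ℝ) 1)
    (hA2 : ∀ n ∈ Finset.Icc 1 N,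
      Summable (fun j : Ωs => p j.1 / |k n j.1|) ∧
        ∑' j : Ωs, p j.1 / |k n j.1| ≤ ρ)
    (hS : ∀ n ∈ Finset.Icc 1 N, Sav Ωs p k n ≠ 0)
    (hz : ∀ i ∈ Finset.Icc 1 (N - 1), z i ∈ Icc (0:ℝ) 1)
    (hab : ∀ i ∈ Finset.Icc 1 (N - 1), ∀ j ∈ Ωs,
      aPt k d z i j ∈ Icc (0:ℝ) 1 ∧ bPt k d z i j ∈ Icc (0:ℝ) 1)
    -- each `z_ℓ` lies in `I_ℓ`, i.e. `I_{ℓ+1} ∪ ⋯ ∪ I_N = (z_ℓ, 1]` inside `[0,1]`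
    (hord : ∀ ℓ ∈ Finset.Icc 1 (N - 1), ∀ w ∈ Icc (0:ℝ) 1, (ℓ < ι w ↔ z ℓ < w))
    (γ : ℕ → ℝ)
    (hγ : ∀ n ∈ Finset.Icc 1 N,
      ∑ m ∈ Finset.Icc 1 (N - 1), fundM Ωs p k d ι z n m * γ m = 0) :
    (∀ ℓ ∈ Finset.Icc 1 (N - 1),
      Filter.Tendsto (hFun Ωs N p k d ι z γ)
        (nhdsWithin (z ℓ) (Ioi (z ℓ))) (nhds (γ ℓ))) ∧
    (hFun Ωs N p k d ι z γ = 0 → ∀ ℓ ∈ Finset.Icc 1 (N - 1), γ ℓ = 0) := by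
  have hp₀ : ∀ j ∈ Ωs, 0 ≤ p j := fun j hj => (hp j hj).le
  have hE : ExpandingOnAverage Ωs p k ι (Tpl k d ι) (ENNReal.ofReal ρ) :=
    ⟨fun j hj x hx => hT j hj x hx,
      fun y hy => tsum_enorm_div_le hp₀ (hA2 _ (hι y hy)).1 (hA2 _ (hι y hy)).2⟩
  have hr : ENNReal.ofReal ρ < 1 := ENNReal.ofReal_lt_one.2 hρ1
  have hslope : ∀ n ∈ Finset.Icc 1 N, Summable fun j : Ωs => p j / k n j :=
    fun n hn => summable_div_of_summable_div_abs hp₀ (hA2 n hn).1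
  have hlim : ∀ ℓ ∈ Finset.Icc 1 (N - 1),
      Tendsto (hFun Ωs N p k d ι z γ) (𝓝[>] z ℓ) (𝓝 (γ ℓ)) := fun ℓ hℓ =>
    sum_mul_weightedJump_KB hE hr hι hslope hS hab hγ hℓ ▸
      tendsto_hFun_nhdsGT hE hr hslope hab γ (hz ℓ hℓ).1 (hord ℓ hℓ)
  exact ⟨hlim, fun h0 ℓ hℓ => tendsto_nhds_unique (h0 ▸ hlim ℓ hℓ) tendsto_const_nhds⟩

/-- if `h_γ` is the `T`-invariant function associated to a solution
`γ` of `Mγ = 0` and each `z_ℓ ∈ I_ℓ`, then the right limit of `h_γ` at `z_ℓ`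
equals `γ_ℓ`; in particular `γ ↦ h_γ` is injective on the null space of `M`. -/
theorem stmt_12 (Ωs : Set ℕ) (N : ℕ) (hN : 2 ≤ N) (p : ℕ → ℝ) (ρ : ℝ)
    (hρ0 : 0 < ρ) (hρ1 : ρ < 1)
    (hp : ∀ j ∈ Ωs, 0 < p j) (hpsum : HasSum (fun j : Ωs => p j.1) 1)
    (k d : ℕ → ℕ → ℝ) (ι : ℝ → ℕ) (z : ℕ → ℝ)
    (hι : ∀ x ∈ Icc (0:ℝ) 1, ι x ∈ Finset.Icc 1 N)
    (hk : ∀ n ∈ Finset.Icc 1 N, ∀ j ∈ Ωs, k n j ≠ 0)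
    (hT : ∀ j ∈ Ωs, ∀ x ∈ Icc (0:ℝ) 1, Tpl k d ι j x ∈ Icc (0:ℝ) 1)
    (hA2 : ∀ n ∈ Finset.Icc 1 N,
      Summable (fun j : Ωs => p j.1 / |k n j.1|) ∧
        ∑' j : Ωs, p j.1 / |k n j.1| ≤ ρ)
    (hS : ∀ n ∈ Finset.Icc 1 N, Sav Ωs p k n ≠ 0)
    (hz : ∀ i ∈ Finset.Icc 1 (N - 1), z i ∈ Icc (0:ℝ) 1)
    (hab : ∀ i ∈ Finset.Icc 1 (N - 1), ∀ j ∈ Ωs,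
      aPt k d z i j ∈ Icc (0:ℝ) 1 ∧ bPt k d z i j ∈ Icc (0:ℝ) 1)
    -- each `z_ℓ` lies in `I_ℓ`, i.e. `I_{ℓ+1} ∪ ⋯ ∪ I_N = (z_ℓ, 1]` inside `[0,1]`
    (hord : ∀ ℓ ∈ Finset.Icc 1 (N - 1), ∀ w ∈ Icc (0:ℝ) 1, (ℓ < ι w ↔ z ℓ < w))
    (γ : ℕ → ℝ)
    (hγ : ∀ n ∈ Finset.Icc 1 N,
      ∑ m ∈ Finset.Icc 1 (N - 1), fundM Ωs p k d ι z n m * γ m = 0) :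
    (∀ ℓ ∈ Finset.Icc 1 (N - 1),
      Filter.Tendsto (hFun Ωs N p k d ι z γ)
        (nhdsWithin (z ℓ) (Ioi (z ℓ))) (nhds (γ ℓ))) ∧
    (hFun Ωs N p k d ι z γ = 0 → ∀ ℓ ∈ Finset.Icc 1 (N - 1), γ ℓ = 0) :=
  stmt_12_general Ωs N p ρ hρ1 hp k d ι z hι hT hA2 hS hz hab hord γ hγ
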